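/- Let Q be a right rooted quiver. If a representation E of Q by left R-modules satisfies: (i) E(v) is an injective R-module for every vertex v, and (ii) for every vertex v the induced map E(v) → ∏_{s(a)=v} E(t(a)) is a split epimorphism, then E is an injective object of (Q, R-Mod). -/

import Mathlib

/-!
Since `Q` has no infinite forward path, "`w` is the target of an arrow out of `v`" is a
well-founded relation, so an extension `Y ⟶ E` of `g : X ⟶ E` along a monomorphism
`f : X ⟶ Y` can be built vertex by vertex, each `Y(v) → E(v)` being constructed after those at
the targets of the arrows out of `v`. At `v` these already chosen maps give
`φ : Y(v) → ∏_{s(a)=v} E(t(a))`, and we need `Y(v) → E(v)` extending `g_v` and lifting `φ`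
through the canonical map `c`. Injectivity of `E(v)` provides an extension, and a section of `c`
corrects it into a lift.
-/

open CategoryTheory

/-- A quiver is right rooted if it contains no infinite path `• → • → • → ⋯`. -/
def RightRooted (Q : Type) [Quiver Q] : Prop :=
  ∀ vtx : ℕ → Q, IsEmpty (∀ n : ℕ, vtx n ⟶ vtx (n + 1))

/-- The canonical morphism `E(v) → ∏_{s(a)=v} E(t(a))` induced by the maps `E(a)`. -/
noncomputable def canonicalSourceMap (Q : Type) [Quiver Q] (R : Type) [Ring R]
    (X : Paths Q ⥤ ModuleCat R) (v : Q) :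
    X.obj ((Paths.of Q).obj v) →ₗ[R] ((a : Σ w : Q, v ⟶ w) → X.obj ((Paths.of Q).obj a.1)) :=
  LinearMap.pi fun a => (X.map ((Paths.of Q).map a.2)).hom

theorem RightRooted.wellFounded {Q : Type} [Quiver Q] (hQ : RightRooted Q) :
    WellFounded fun w v : Q => Nonempty (v ⟶ w) :=
  wellFounded_iff_isEmpty_descending_chain.mpr
    ⟨fun ⟨vtx, hvtx⟩ => (hQ vtx).false fun n => (hvtx n).some⟩

theorem WellFounded.exists_forall_of_step {α : Type*} {r : α → α → Prop} (hr : WellFounded r)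
    {β : α → Sort*} (P : ∀ v, (∀ w, r w v → β w) → β v → Prop)
    (step : ∀ v prev, ∃ x, P v prev x) :
    ∃ x : ∀ v, β v, ∀ v, P v (fun w _ => x w) (x v) := by
  choose F hF using step
  exact ⟨hr.fix F, fun v => hr.fix_eq F v ▸ hF v _⟩

universe v in
theorem Module.Injective.exists_extension_and_lift {R : Type*} [Ring R]
    {E X Y : Type v} {P : Type*} [AddCommGroup E] [AddCommGroup X] [AddCommGroup Y] [AddCommGroup P]
    [Module R E] [Module R X] [Module R Y] [Module R P] [Module.Injective R E]
    {c : E →ₗ[R] P} {s : P →ₗ[R] E} (hcs : c ∘ₗ s = LinearMap.id)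
    {f : X →ₗ[R] Y} (hf : Function.Injective f) (g : X →ₗ[R] E) (φ : Y →ₗ[R] P)
    (hcomm : c ∘ₗ g = φ ∘ₗ f) :
    ∃ h : Y →ₗ[R] E, h ∘ₗ f = g ∧ c ∘ₗ h = φ := by
  -- `g - s φ f` takes values in `ker c`; extend it to `k`, project `k` back to `ker c` along `s`,
  -- and add `s φ`.
  obtain ⟨k, hk⟩ := Module.Injective.out f hf (g - s ∘ₗ φ ∘ₗ f)
  refine ⟨s ∘ₗ φ + (LinearMap.id - s ∘ₗ c) ∘ₗ k, ?_, ?_⟩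
  · ext x
    have hcx : c (g x) = φ (f x) := LinearMap.congr_fun hcomm x
    simp [hk, hcx, ← LinearMap.comp_apply c s, hcs]
  · ext y
    simp [← LinearMap.comp_apply c s, hcs]

theorem CategoryTheory.Paths.naturality_of_arrows {V C : Type*} [Quiver V] [Category C]
    {F G : Paths V ⥤ C} (app : ∀ v, F.obj v ⟶ G.obj v)
    (h : ∀ {u v : V} (a : u ⟶ v),
      F.map ((Paths.of V).map a) ≫ app ((Paths.of V).obj v) =
        app ((Paths.of V).obj u) ≫ G.map ((Paths.of V).map a))
    {u v : Paths V} (p : u ⟶ v) : F.map p ≫ app v = app u ≫ G.map p := by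
  induction p using Paths.induction_fixed_source with
  | id => simp
  | comp p a hp => rw [Functor.map_comp, Functor.map_comp, Category.assoc, h, reassoc_of% hp]

section

variable {Q : Type} [Quiver Q] {R : Type} [Ring R] {E X Y : Paths Q ⥤ ModuleCat R}

abbrev ComponentExtension (g : X ⟶ E) (f : X ⟶ Y) (v : Paths Q) :=
  {k : Y.obj v →ₗ[R] E.obj v // k ∘ₗ (f.app v).hom = (g.app v).hom}

theorem exists_componentExtension_commuting_with_arrows (g : X ⟶ E) (f : X ⟶ Y) {v : Q}
    [Module.Injective R (E.obj ((Paths.of Q).obj v))]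
    (hsplit : ∃ s, canonicalSourceMap Q R E v ∘ₗ s = LinearMap.id)
    (hf : Function.Injective (f.app ((Paths.of Q).obj v)))
    (k : ∀ a : Σ w : Q, v ⟶ w, ComponentExtension g f a.1) :
    ∃ e : ComponentExtension g f ((Paths.of Q).obj v), ∀ a : Σ w : Q, v ⟶ w,
      (E.map ((Paths.of Q).map a.2)).hom ∘ₗ e.1 =
        (k a).1 ∘ₗ (Y.map ((Paths.of Q).map a.2)).hom := by
  obtain ⟨s, hs⟩ := hsplit
  have hcomm : canonicalSourceMap Q R E v ∘ₗ (g.app ((Paths.of Q).obj v)).hom =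
      (LinearMap.pi fun a => (k a).1 ∘ₗ (Y.map ((Paths.of Q).map a.2)).hom) ∘ₗ
        (f.app ((Paths.of Q).obj v)).hom := by
    ext x a
    change E.map ((Paths.of Q).map a.2) (g.app ((Paths.of Q).obj v) x) =
      (k a).1 (Y.map ((Paths.of Q).map a.2) (f.app ((Paths.of Q).obj v) x))
    rw [← NatTrans.naturality_apply, ← NatTrans.naturality_apply]
    exact (LinearMap.congr_fun (k a).2 _).symm
  obtain ⟨h, hhf, hhc⟩ := Module.Injective.exists_extension_and_lift hs hf _ _ hcomm
  exact ⟨⟨h, hhf⟩, fun a => congrArg (LinearMap.proj a ∘ₗ ·) hhc⟩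

end

/-- Let `Q` be a right rooted quiver.  If a representation `E` of `Q` by left
`R`-modules satisfies (i) `E(v)` is an injective `R`-module for every vertex `v`, and (ii) for
every vertex `v` the induced map `E(v) → ∏_{s(a)=v} E(t(a))` is a split epimorphism, then `E`
is an injective object of `(Q, R-Mod)`. -/
theorem rightRooted_source_injective
    (Q : Type) [Quiver Q] (hQ : RightRooted Q) (R : Type) [Ring R]
    (E : Paths Q ⥤ ModuleCat R)
    (h1 : ∀ v : Q, Module.Injective R (E.obj ((Paths.of Q).obj v)))
    (h2 : ∀ v : Q, ∃ s : ((a : Σ w : Q, v ⟶ w) → E.obj ((Paths.of Q).obj a.1)) →ₗ[R]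
        E.obj ((Paths.of Q).obj v),
      (canonicalSourceMap Q R E v) ∘ₗ s = LinearMap.id) :
    CategoryTheory.Injective E := by
  refine ⟨fun {X Y} g f hf => ?_⟩
  have hf_app (v : Paths Q) : Function.Injective (f.app v) :=
    (ModuleCat.mono_iff_injective (f.app v)).1 inferInstance
  obtain ⟨G, hG⟩ := hQ.wellFounded.exists_forall_of_step (β := ComponentExtension g f)
    (fun v prev e => ∀ a : Σ w : Q, v ⟶ w, (E.map ((Paths.of Q).map a.2)).hom ∘ₗ e.1 =
      (prev a.1 ⟨a.2⟩).1 ∘ₗ (Y.map ((Paths.of Q).map a.2)).hom)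
    fun v prev => exists_componentExtension_commuting_with_arrows g f (h2 v) (hf_app _)
      fun a => prev a.1 ⟨a.2⟩
  refine ⟨{ app v := ModuleCat.ofHom (G v).1
            naturality _ _ p := Paths.naturality_of_arrows (fun v => ModuleCat.ofHom (G v).1)
              (fun a => ModuleCat.hom_ext (hG _ ⟨_, a⟩).symm) p }, ?_⟩
  ext v : 2
  exact ModuleCat.hom_ext (G v).2
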